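/- Let w ∈ ℝ² and let v₁, v₂ ∈ ℝ² be linearly independent unit vectors. Then for every r ≥ 0, the closed tube of radius r around the cone C(v₁,v₂,w) satisfies T(C(v₁,v₂,w), r) = C(v₁,v₂,w) ∪ R₁(r) ∪ R₂(r) ∪ R₃(r), where R₁(r) = {z ∈ ℝ² : ⟨v₁, z−w⟩ ≥ 0 and −r ≤ ⟨v₁^⊥, z−w⟩ ≤ 0}, R₃(r) = {z ∈ ℝ² : ⟨v₂, z−w⟩ ≥ 0 and −r ≤ ⟨v₂^⊥, z−w⟩ ≤ 0}, and R₂(r) = {w + tν : 0 ≤ t ≤ r, ν ∈ ℝ² a unit vector with ⟨ν, v₁⟩ ≤ 0 and ⟨ν, v₂⟩ ≤ 0}; moreover the pairwise intersections of the four sets C(v₁,v₂,w), R₁(r), R₂(r), R₃(r) are Lebesgue null sets. -/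

import Mathlib

/-!
Write `z - w = α • v₁ + β • v₂`. Points of the tube are located by lower bounds on the
distance to the cone: the cone lies in the half-planes `0 ≤ ⟪pᵢ, · - w⟫`, which bounds the
distance below by `-⟪pᵢ, z - w⟫`, and when `⟪v₁, z - w⟫ ≤ 0` and `⟪v₂, z - w⟫ ≤ 0` the
vertex `w` is a nearest point of the cone. The signs of `α`, `β`, `⟪v₁, z - w⟫`,
`⟪v₂, z - w⟫` then put `z` in one of the four pieces; conversely every piece is within `r`
of the vertex or of a foot of perpendicular on an edge. Each pairwise intersection lies on a
line through `w`.
-/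

open MeasureTheory Real
open scoped RealInnerProductSpace

/-- The closed tube (r-thickening) of a set. -/
def tube {k : ℕ} (A : Set (EuclideanSpace ℝ (Fin k))) (r : ℝ) :
    Set (EuclideanSpace ℝ (Fin k)) :=
  {y | Metric.infDist y A ≤ r}

/-- The cone `C(v₁,v₂,w) = {w + a₁v₁ + a₂v₂ : a₁, a₂ ≥ 0}` in `ℝ²`. -/
def cone2 (v₁ v₂ w : EuclideanSpace ℝ (Fin 2)) : Set (EuclideanSpace ℝ (Fin 2)) :=
  {z | ∃ a₁ a₂ : ℝ, 0 ≤ a₁ ∧ 0 ≤ a₂ ∧ z = w + a₁ • v₁ + a₂ • v₂}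

/-- The side region `R₁(r)` (resp. `R₃(r)`) of the tube around the cone, along the
face spanned by `v` with inward conormal `p`. -/
def sideRegion (v p w : EuclideanSpace ℝ (Fin 2)) (r : ℝ) : Set (EuclideanSpace ℝ (Fin 2)) :=
  {z | 0 ≤ ⟪v, z - w⟫ ∧ -r ≤ ⟪p, z - w⟫ ∧ ⟪p, z - w⟫ ≤ 0}

/-- The corner region `R₂(r)` of the tube around the cone. -/
def cornerRegion (v₁ v₂ w : EuclideanSpace ℝ (Fin 2)) (r : ℝ) :
    Set (EuclideanSpace ℝ (Fin 2)) :=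
  {z | ∃ t : ℝ, ∃ ν : EuclideanSpace ℝ (Fin 2), 0 ≤ t ∧ t ≤ r ∧ ‖ν‖ = 1 ∧
    ⟪ν, v₁⟫ ≤ 0 ∧ ⟪ν, v₂⟫ ≤ 0 ∧ z = w + t • ν}

section General

variable {E : Type*} [NormedAddCommGroup E] [InnerProductSpace ℝ E]

lemma exists_smul_add_smul_eq (hE : Module.finrank ℝ E = 2) {u₁ u₂ : E}
    (hu : LinearIndependent ℝ ![u₁, u₂]) (x : E) : ∃ a b : ℝ, a • u₁ + b • u₂ = x := by
  have hspan := hu.span_eq_top_of_card_eq_finrank (by simp [hE])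
  rw [Matrix.range_cons, Matrix.range_cons, Matrix.range_empty, Set.union_empty,
    Set.singleton_union] at hspan
  exact Submodule.mem_span_pair.1 (hspan ▸ Submodule.mem_top)

lemma inner_smul_add_inner_smul_eq (hE : Module.finrank ℝ E = 2) {v p : E}
    (hv : ‖v‖ = 1) (hp : ‖p‖ = 1) (hpv : ⟪p, v⟫ = 0) (x : E) :
    ⟪v, x⟫ • v + ⟪p, x⟫ • p = x := by
  have hvp : ⟪v, p⟫ = 0 := by rwa [real_inner_comm]
  have hon : Orthonormal ℝ ![v, p] := by
    rw [orthonormal_iff_ite]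
    intro i j
    fin_cases i <;> fin_cases j <;> simp [hv, hp, hpv, hvp]
  obtain ⟨a, b, rfl⟩ := exists_smul_add_smul_eq hE hon.linearIndependent x
  simp [inner_add_right, real_inner_smul_right, hv, hp, hpv, hvp]

variable {A : Set E} {w z : E}

lemma neg_inner_sub_le_infDist {p : E} (hp : ‖p‖ ≤ 1) (hA : A.Nonempty)
    (hAp : ∀ y ∈ A, 0 ≤ ⟪p, y - w⟫) : -⟪p, z - w⟫ ≤ Metric.infDist z A := by
  refine (Metric.le_infDist hA).2 fun y hy => ?_
  calc -⟪p, z - w⟫ ≤ ⟪p, y - w⟫ - ⟪p, z - w⟫ := by linarith [hAp y hy]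
    _ = ⟪p, y - z⟫ := by rw [← inner_sub_right, sub_sub_sub_cancel_right]
    _ ≤ ‖p‖ * ‖y - z‖ := real_inner_le_norm p (y - z)
    _ ≤ dist z y := by
      rw [dist_comm, dist_eq_norm]
      exact mul_le_of_le_one_left (norm_nonneg _) hp

lemma norm_sub_le_infDist (hA : A.Nonempty) (hAz : ∀ y ∈ A, ⟪z - w, y - w⟫ ≤ 0) :
    ‖z - w‖ ≤ Metric.infDist z A := by
  refine (Metric.le_infDist hA).2 fun y hy => ?_
  have hsq : ‖z - w‖ ^ 2 ≤ dist z y ^ 2 := by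
    rw [dist_eq_norm, ← sub_sub_sub_cancel_right z y w, norm_sub_sq_real (z - w)]
    nlinarith [hAz y hy, sq_nonneg ‖y - w‖]
  exact (pow_le_pow_iff_left₀ (norm_nonneg _) dist_nonneg two_ne_zero).1 hsq

lemma eq_zero_of_eq_smul_add_smul_of_inner_nonpos {u₁ u₂ x : E} {a b : ℝ} (ha : 0 ≤ a)
    (hb : 0 ≤ b) (hx : x = a • u₁ + b • u₂) (h₁ : ⟪u₁, x⟫ ≤ 0) (h₂ : ⟪u₂, x⟫ ≤ 0) : x = 0 := by
  have : ⟪x, x⟫ ≤ 0 := by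
    nth_rewrite 1 [hx]
    rw [inner_add_left, real_inner_smul_left, real_inner_smul_left]
    nlinarith [mul_nonpos_of_nonneg_of_nonpos ha h₁, mul_nonpos_of_nonneg_of_nonpos hb h₂]
  exact real_inner_self_nonpos.1 this

lemma volume_setOf_inner_sub_eq_zero [MeasurableSpace E] [BorelSpace E] [FiniteDimensional ℝ E]
    (μ : Measure E) [μ.IsAddHaarMeasure] {u : E} (hu : u ≠ 0) (w : E) :
    μ {z | ⟪u, z - w⟫ = 0} = 0 := by
  have hK : μ ((ℝ ∙ u)ᗮ : Set E) = 0 := by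
    refine Measure.addHaar_submodule μ _ fun h => hu ?_
    have : u ∈ (ℝ ∙ u)ᗮ := h ▸ Submodule.mem_top
    exact inner_self_eq_zero.1 (Submodule.mem_orthogonal_singleton_iff_inner_right.1 this)
  have heq : {z | ⟪u, z - w⟫ = 0} = (· + (-w)) ⁻¹' ((ℝ ∙ u)ᗮ : Set E) := by
    ext z
    simp [Submodule.mem_orthogonal_singleton_iff_inner_right, sub_eq_add_neg]
  rw [heq, measure_preimage_add_right, hK]

end General

/-- With `z - w = α • v₁ + β • v₂` and `c = ⟪v₁, v₂⟫`, the four alternatives say that `z`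
lies in the cone, in `R₁`, in `R₂` or in `R₃`; they exhaust the plane because `|c| ≤ 1`. -/
lemma sector_cases {α β c : ℝ} (hc : c ^ 2 ≤ 1) :
    (0 ≤ α ∧ 0 ≤ β) ∨ (β ≤ 0 ∧ 0 ≤ α + β * c) ∨ (α + β * c ≤ 0 ∧ α * c + β ≤ 0) ∨
      (α ≤ 0 ∧ 0 ≤ α * c + β) := by
  rcases le_or_gt 0 α with hα | hα <;> rcases le_or_gt 0 β with hβ | hβ
  · exact Or.inl ⟨hα, hβ⟩
  · rcases le_or_gt 0 (α + β * c) with h | h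
    · exact Or.inr (Or.inl ⟨hβ.le, h⟩)
    · have hc0 : 0 < c := by nlinarith
      refine Or.inr (Or.inr (Or.inl ⟨h.le, ?_⟩))
      nlinarith [mul_lt_mul_of_pos_right h hc0,
        mul_nonpos_of_nonpos_of_nonneg hβ.le (sub_nonneg.2 hc)]
  · rcases le_or_gt 0 (α * c + β) with h | h
    · exact Or.inr (Or.inr (Or.inr ⟨hα.le, h⟩))
    · have hc0 : 0 < c := by nlinarith
      refine Or.inr (Or.inr (Or.inl ⟨?_, h.le⟩))
      nlinarith [mul_lt_mul_of_pos_right h hc0,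
        mul_nonpos_of_nonpos_of_nonneg hα.le (sub_nonneg.2 hc)]
  · rcases le_or_gt 0 (α + β * c) with h | h
    · exact Or.inr (Or.inl ⟨hβ.le, h⟩)
    rcases le_or_gt 0 (α * c + β) with h' | h'
    · exact Or.inr (Or.inr (Or.inr ⟨hα.le, h'⟩))
    · exact Or.inr (Or.inr (Or.inl ⟨h.le, h'.le⟩))

section Cone

variable {v₁ v₂ w z : EuclideanSpace ℝ (Fin 2)} {r : ℝ}

lemma self_mem_cone2 : w ∈ cone2 v₁ v₂ w :=
  ⟨0, 0, le_rfl, le_rfl, by simp⟩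

lemma add_smul_mem_cone2 {t : ℝ} (ht : 0 ≤ t) : w + t • v₁ ∈ cone2 v₁ v₂ w :=
  ⟨t, 0, ht, le_rfl, by simp⟩

lemma cone2_comm : cone2 v₁ v₂ w = cone2 v₂ v₁ w := by
  ext z
  constructor <;> rintro ⟨a₁, a₂, h₁, h₂, rfl⟩ <;> exact ⟨a₂, a₁, h₂, h₁, by abel⟩

lemma inner_sub_nonneg_of_mem_cone2 {p : EuclideanSpace ℝ (Fin 2)} (h₁ : 0 ≤ ⟪p, v₁⟫)
    (h₂ : 0 ≤ ⟪p, v₂⟫) (hz : z ∈ cone2 v₁ v₂ w) : 0 ≤ ⟪p, z - w⟫ := by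
  obtain ⟨a₁, a₂, ha₁, ha₂, rfl⟩ := hz
  rw [add_assoc, add_sub_cancel_left, inner_add_right, real_inner_smul_right,
    real_inner_smul_right]
  positivity

lemma inner_nonpos_of_mem_cornerRegion (hz : z ∈ cornerRegion v₁ v₂ w r) :
    ⟪v₁, z - w⟫ ≤ 0 ∧ ⟪v₂, z - w⟫ ≤ 0 := by
  obtain ⟨t, ν, ht, -, -, h₁, h₂, rfl⟩ := hz
  rw [add_sub_cancel_left, real_inner_smul_right, real_inner_comm,
    real_inner_smul_right, real_inner_comm ν]
  exact ⟨mul_nonpos_of_nonneg_of_nonpos ht h₁, mul_nonpos_of_nonneg_of_nonpos ht h₂⟩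

lemma mem_cornerRegion_of_ne (hzw : z ≠ w) (hzr : ‖z - w‖ ≤ r) (h₁ : ⟪v₁, z - w⟫ ≤ 0)
    (h₂ : ⟪v₂, z - w⟫ ≤ 0) : z ∈ cornerRegion v₁ v₂ w r := by
  have hx : z - w ≠ 0 := sub_ne_zero.2 hzw
  have hn : 0 ≤ ‖z - w‖⁻¹ := inv_nonneg.2 (norm_nonneg _)
  refine ⟨‖z - w‖, ‖z - w‖⁻¹ • (z - w), norm_nonneg _, hzr, norm_smul_inv_norm hx, ?_, ?_, ?_⟩
  · rw [real_inner_smul_left, real_inner_comm]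
    exact mul_nonpos_of_nonneg_of_nonpos hn h₁
  · rw [real_inner_smul_left, real_inner_comm]
    exact mul_nonpos_of_nonneg_of_nonpos hn h₂
  · rw [smul_inv_smul₀ (norm_ne_zero_iff.2 hx), add_sub_cancel]

lemma infDist_le_of_mem_cornerRegion {A : Set (EuclideanSpace ℝ (Fin 2))} (hw : w ∈ A)
    (hz : z ∈ cornerRegion v₁ v₂ w r) : Metric.infDist z A ≤ r := by
  obtain ⟨t, ν, ht, htr, hν, -, -, rfl⟩ := hz
  calc Metric.infDist (w + t • ν) A ≤ dist (w + t • ν) w := Metric.infDist_le_dist_of_mem hw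
    _ = t := by rw [dist_eq_norm, add_sub_cancel_left, norm_smul, hν, mul_one, norm_of_nonneg ht]
    _ ≤ r := htr

lemma infDist_le_of_mem_sideRegion {A : Set (EuclideanSpace ℝ (Fin 2))}
    {v p : EuclideanSpace ℝ (Fin 2)} (hv : ‖v‖ = 1) (hp : ‖p‖ = 1) (hpv : ⟪p, v⟫ = 0)
    (hA : ∀ t : ℝ, 0 ≤ t → w + t • v ∈ A) (hz : z ∈ sideRegion v p w r) :
    Metric.infDist z A ≤ r := by
  obtain ⟨hv₀, hpr, hp₀⟩ := hz
  have hfoot : z - (w + ⟪v, z - w⟫ • v) = ⟪p, z - w⟫ • p := by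
    rw [← sub_sub]
    exact sub_eq_iff_eq_add'.2
      (inner_smul_add_inner_smul_eq finrank_euclideanSpace_fin hv hp hpv _).symm
  calc Metric.infDist z A ≤ dist z (w + ⟪v, z - w⟫ • v) := Metric.infDist_le_dist_of_mem (hA _ hv₀)
    _ = -⟪p, z - w⟫ := by rw [dist_eq_norm, hfoot, norm_smul, hp, mul_one, norm_of_nonpos hp₀]
    _ ≤ r := by linarith

lemma neg_inner_sub_le_infDist_cone2 {p : EuclideanSpace ℝ (Fin 2)} (hp : ‖p‖ = 1)
    (h₁ : 0 ≤ ⟪p, v₁⟫) (h₂ : 0 ≤ ⟪p, v₂⟫) : -⟪p, z - w⟫ ≤ Metric.infDist z (cone2 v₁ v₂ w) :=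
  neg_inner_sub_le_infDist hp.le ⟨w, self_mem_cone2⟩
    fun _ hy => inner_sub_nonneg_of_mem_cone2 h₁ h₂ hy

lemma mem_cornerRegion_of_infDist_le (hzw : z ≠ w) (hz : Metric.infDist z (cone2 v₁ v₂ w) ≤ r)
    (h₁ : ⟪v₁, z - w⟫ ≤ 0) (h₂ : ⟪v₂, z - w⟫ ≤ 0) : z ∈ cornerRegion v₁ v₂ w r := by
  have hpolar : ∀ y ∈ cone2 v₁ v₂ w, ⟪z - w, y - w⟫ ≤ 0 := fun y hy => by
    have := inner_sub_nonneg_of_mem_cone2 (p := -(z - w))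
      (by rw [inner_neg_left, real_inner_comm]; linarith)
      (by rw [inner_neg_left, real_inner_comm]; linarith) hy
    rwa [inner_neg_left, neg_nonneg] at this
  exact mem_cornerRegion_of_ne hzw ((norm_sub_le_infDist ⟨w, self_mem_cone2⟩ hpolar).trans hz)
    h₁ h₂

lemma tube_cone2_subset {p₁ p₂ : EuclideanSpace ℝ (Fin 2)} (hv₁ : ‖v₁‖ = 1) (hv₂ : ‖v₂‖ = 1)
    (hli : LinearIndependent ℝ ![v₁, v₂]) (hp₁ : ‖p₁‖ = 1) (hp₁v₁ : ⟪p₁, v₁⟫ = 0)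
    (hp₁v₂ : 0 < ⟪p₁, v₂⟫) (hp₂ : ‖p₂‖ = 1) (hp₂v₂ : ⟪p₂, v₂⟫ = 0) (hp₂v₁ : 0 < ⟪p₂, v₁⟫) :
    tube (cone2 v₁ v₂ w) r ⊆
      cone2 v₁ v₂ w ∪ sideRegion v₁ p₁ w r ∪ cornerRegion v₁ v₂ w r ∪ sideRegion v₂ p₂ w r := by
  intro z (hz : Metric.infDist z (cone2 v₁ v₂ w) ≤ r)
  have hc : ⟪v₁, v₂⟫ ^ 2 ≤ 1 := by
    rw [sq_le_one_iff_abs_le_one]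
    simpa [hv₁, hv₂] using abs_real_inner_le_norm v₁ v₂
  obtain ⟨α, β, hx⟩ := exists_smul_add_smul_eq finrank_euclideanSpace_fin hli (z - w)
  have hv₁x : ⟪v₁, z - w⟫ = α + β * ⟪v₁, v₂⟫ := by
    simp [← hx, inner_add_right, real_inner_smul_right, hv₁]
  have hv₂x : ⟪v₂, z - w⟫ = α * ⟪v₁, v₂⟫ + β := by
    simp [← hx, inner_add_right, real_inner_smul_right, hv₂, real_inner_comm v₁]
  have hp₁x : ⟪p₁, z - w⟫ = β * ⟪p₁, v₂⟫ := by
    simp [← hx, inner_add_right, real_inner_smul_right, hp₁v₁]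
  have hp₂x : ⟪p₂, z - w⟫ = α * ⟪p₂, v₁⟫ := by
    simp [← hx, inner_add_right, real_inner_smul_right, hp₂v₂]
  have hp₁r := (neg_inner_sub_le_infDist_cone2 hp₁ hp₁v₁.ge hp₁v₂.le).trans hz
  have hp₂r := (neg_inner_sub_le_infDist_cone2 hp₂ hp₂v₁.le hp₂v₂.ge).trans hz
  simp only [Set.mem_union]
  rcases sector_cases hc with ⟨hα, hβ⟩ | ⟨hβ, h⟩ | ⟨h₁, h₂⟩ | ⟨hα, h⟩
  · exact Or.inl (Or.inl (Or.inl ⟨α, β, hα, hβ, by rw [add_assoc, hx, add_sub_cancel]⟩))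
  · refine Or.inl (Or.inl (Or.inr ⟨hv₁x ▸ h, by linarith, ?_⟩))
    exact hp₁x ▸ mul_nonpos_of_nonpos_of_nonneg hβ hp₁v₂.le
  · rcases eq_or_ne z w with rfl | hzw
    · exact Or.inl (Or.inl (Or.inl self_mem_cone2))
    exact Or.inl (Or.inr (mem_cornerRegion_of_infDist_le hzw hz (hv₁x ▸ h₁) (hv₂x ▸ h₂)))
  · refine Or.inr ⟨hv₂x ▸ h, by linarith, ?_⟩
    exact hp₂x ▸ mul_nonpos_of_nonpos_of_nonneg hα hp₂v₁.le

lemma union_subset_tube_cone2 {p₁ p₂ : EuclideanSpace ℝ (Fin 2)} (hv₁ : ‖v₁‖ = 1)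
    (hv₂ : ‖v₂‖ = 1) (hp₁ : ‖p₁‖ = 1) (hp₁v₁ : ⟪p₁, v₁⟫ = 0) (hp₂ : ‖p₂‖ = 1)
    (hp₂v₂ : ⟪p₂, v₂⟫ = 0) (hr : 0 ≤ r) :
    cone2 v₁ v₂ w ∪ sideRegion v₁ p₁ w r ∪ cornerRegion v₁ v₂ w r ∪ sideRegion v₂ p₂ w r ⊆
      tube (cone2 v₁ v₂ w) r := by
  refine Set.union_subset (Set.union_subset (Set.union_subset ?_ ?_) ?_) ?_ <;> intro z hz
  · exact (Metric.infDist_zero_of_mem hz).trans_le hr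
  · exact infDist_le_of_mem_sideRegion hv₁ hp₁ hp₁v₁ (fun _ ht => add_smul_mem_cone2 ht) hz
  · exact infDist_le_of_mem_cornerRegion self_mem_cone2 hz
  · refine infDist_le_of_mem_sideRegion hv₂ hp₂ hp₂v₂ (fun _ ht => ?_) hz
    exact cone2_comm ▸ add_smul_mem_cone2 ht

lemma cone2_inter_cornerRegion_subset : cone2 v₁ v₂ w ∩ cornerRegion v₁ v₂ w r ⊆ {w} := by
  rintro z ⟨⟨a₁, a₂, ha₁, ha₂, rfl⟩, hz⟩
  obtain ⟨h₁, h₂⟩ := inner_nonpos_of_mem_cornerRegion hz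
  have hx : w + a₁ • v₁ + a₂ • v₂ - w = a₁ • v₁ + a₂ • v₂ := by abel
  rw [hx] at h₁ h₂
  rw [Set.mem_singleton_iff, add_assoc, add_eq_left]
  exact eq_zero_of_eq_smul_add_smul_of_inner_nonpos ha₁ ha₂ rfl h₁ h₂

lemma sideRegion_inter_sideRegion_subset {p₁ p₂ : EuclideanSpace ℝ (Fin 2)}
    (hli : LinearIndependent ℝ ![v₁, v₂]) (hp₁v₁ : ⟪p₁, v₁⟫ = 0) (hp₁v₂ : 0 < ⟪p₁, v₂⟫)
    (hp₂v₂ : ⟪p₂, v₂⟫ = 0) (hp₂v₁ : 0 < ⟪p₂, v₁⟫) :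
    sideRegion v₁ p₁ w r ∩ sideRegion v₂ p₂ w r ⊆ {w} := by
  rintro z ⟨⟨h₁, -, hp₁z⟩, ⟨h₂, -, hp₂z⟩⟩
  obtain ⟨α, β, hx⟩ := exists_smul_add_smul_eq finrank_euclideanSpace_fin hli (z - w)
  have hβ : 0 ≤ -β := by
    simp only [← hx, inner_add_right, real_inner_smul_right, hp₁v₁] at hp₁z
    nlinarith
  have hα : 0 ≤ -α := by
    simp only [← hx, inner_add_right, real_inner_smul_right, hp₂v₂] at hp₂z
    nlinarith
  have h₀ : -(z - w) = 0 := eq_zero_of_eq_smul_add_smul_of_inner_nonpos hα hβ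
    (by rw [neg_smul, neg_smul, ← neg_add, hx])
    (by rwa [inner_neg_right, neg_nonpos]) (by rwa [inner_neg_right, neg_nonpos])
  rwa [neg_eq_zero, sub_eq_zero] at h₀

end Cone

theorem stmt13 (v₁ v₂ p₁ p₂ w : EuclideanSpace ℝ (Fin 2))
    (hv₁ : ‖v₁‖ = 1) (hv₂ : ‖v₂‖ = 1) (hli : LinearIndependent ℝ ![v₁, v₂])
    (hp₁ : ‖p₁‖ = 1) (hp₁v₁ : ⟪p₁, v₁⟫ = 0) (hp₁v₂ : 0 < ⟪p₁, v₂⟫)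
    (hp₂ : ‖p₂‖ = 1) (hp₂v₂ : ⟪p₂, v₂⟫ = 0) (hp₂v₁ : 0 < ⟪p₂, v₁⟫)
    (r : ℝ) (hr : 0 ≤ r) :
    tube (cone2 v₁ v₂ w) r =
      cone2 v₁ v₂ w ∪ sideRegion v₁ p₁ w r ∪ cornerRegion v₁ v₂ w r ∪ sideRegion v₂ p₂ w r ∧
    volume (cone2 v₁ v₂ w ∩ sideRegion v₁ p₁ w r) = 0 ∧
    volume (cone2 v₁ v₂ w ∩ cornerRegion v₁ v₂ w r) = 0 ∧
    volume (cone2 v₁ v₂ w ∩ sideRegion v₂ p₂ w r) = 0 ∧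
    volume (sideRegion v₁ p₁ w r ∩ cornerRegion v₁ v₂ w r) = 0 ∧
    volume (sideRegion v₁ p₁ w r ∩ sideRegion v₂ p₂ w r) = 0 ∧
    volume (cornerRegion v₁ v₂ w r ∩ sideRegion v₂ p₂ w r) = 0 := by
  have hline : ∀ u : EuclideanSpace ℝ (Fin 2), ‖u‖ = 1 → volume {z | ⟪u, z - w⟫ = 0} = 0 :=
    fun u hu => volume_setOf_inner_sub_eq_zero volume (norm_ne_zero_iff.1 (by simp [hu])) w
  refine ⟨(tube_cone2_subset hv₁ hv₂ hli hp₁ hp₁v₁ hp₁v₂ hp₂ hp₂v₂ hp₂v₁).antisymm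
    (union_subset_tube_cone2 hv₁ hv₂ hp₁ hp₁v₁ hp₂ hp₂v₂ hr), ?_, ?_, ?_, ?_, ?_, ?_⟩
  · refine measure_mono_null (fun z hz => ?_) (hline p₁ hp₁)
    exact le_antisymm hz.2.2.2 (inner_sub_nonneg_of_mem_cone2 hp₁v₁.ge hp₁v₂.le hz.1)
  · exact measure_mono_null cone2_inter_cornerRegion_subset (measure_singleton w)
  · refine measure_mono_null (fun z hz => ?_) (hline p₂ hp₂)
    exact le_antisymm hz.2.2.2 (inner_sub_nonneg_of_mem_cone2 hp₂v₁.le hp₂v₂.ge hz.1)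
  · refine measure_mono_null (fun z hz => ?_) (hline v₁ hv₁)
    exact le_antisymm (inner_nonpos_of_mem_cornerRegion hz.2).1 hz.1.1
  · exact measure_mono_null (sideRegion_inter_sideRegion_subset hli hp₁v₁ hp₁v₂ hp₂v₂ hp₂v₁)
      (measure_singleton w)
  · refine measure_mono_null (fun z hz => ?_) (hline v₂ hv₂)
    exact le_antisymm (inner_nonpos_of_mem_cornerRegion hz.1).2 hz.2.1
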